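/- arXiv:1206.4865 — 2 statements merged into one kernel-verified Lean document; each statement's English description precedes it below -/
import Mathlib

section
/- Let p be a prime and r ≥ 1 a natural number. Let ξ be an element of the finite field F_{p^r} whose minimal polynomial over F_p has degree r (so that 1, ξ, ..., ξ^{r-1} form an F_p-basis of F_{p^r}). Let A ∈ M_r(F_p) be the matrix representing the F_p-linear map m_ξ : F_{p^r} → F_{p^r}, x ↦ ξx, with respect to the basis {1, ξ, ..., ξ^{r-1}}, and let A' ∈ M_r(F_{p^r}) be A with its entries viewed in F_{p^r}. Then there exists a column vector S₁ ∈ F_{p^r}^r such that the r×r matrix S whose i-th column (for 0 ≤ i ≤ r−1) is obtained by applying the Frobenius σ : x ↦ x^p entrywise i times to S₁ is invertible over F_{p^r}, and S⁻¹ A' S = diag(ξ, ξ^p, ξ^{p^2}, ..., ξ^{p^{r-1}}). -/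
/-!
`(1, ξ, …, ξ^{r-1})` is a left eigenvector of `A` for `ξ`, so `ξ` is an eigenvalue of `A` and
has a right eigenvector `S₁`. As `A` has entries in `𝔽_p`, the entrywise Frobenius power
`σⁱ S₁` is an eigenvector for `ξ^{p^i}`, i.e. `A S = S · diag(ξ, ξ^p, …, ξ^{p^{r-1}})`. These
eigenvalues are distinct: `ξ` generates `𝔽_{p^r}`, so `σⁱ ξ = σʲ ξ` forces `σⁱ = σʲ`, and `σ`
has order `r`. Hence the columns of `S` are linearly independent and `S` is invertible.
-/

open Matrix IntermediateField

namespace Matrix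

section Eigen

variable {n : Type*} [Fintype n] [DecidableEq n]

theorem exists_mulVec_eq_smul_of_vecMul_eq_smul {R : Type*} [CommRing R] [IsDomain R]
    {M : Matrix n n R} {v : n → R} {c : R} (hv : v ≠ 0) (h : v ᵥ* M = c • v) :
    ∃ w ≠ 0, M *ᵥ w = c • w := by
  have hdet : (M - c • 1).det = 0 :=
    exists_vecMul_eq_zero_iff.mp ⟨v, hv, by rw [vecMul_sub, h, vecMul_smul, vecMul_one, sub_self]⟩
  obtain ⟨w, hw, hMw⟩ := exists_mulVec_eq_zero_iff.mpr hdet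
  exact ⟨w, hw, by rwa [sub_mulVec, smul_mulVec, one_mulVec, sub_eq_zero] at hMw⟩

theorem isUnit_of_mul_eq_mul_diagonal {K : Type*} [Field K] {M S : Matrix n n K} {d : n → K}
    (hd : Function.Injective d) (hS : ∀ i, S.col i ≠ 0) (h : M * S = S * diagonal d) :
    IsUnit S := by
  rw [← linearIndependent_cols_iff_isUnit]
  refine Module.End.eigenvectors_linearIndependent' M.mulVecLin d hd S.col
    fun i => ⟨Module.End.mem_eigenspace_iff.mpr ?_, hS i⟩
  funext k
  have hki := congrFun (congrFun h k) i
  rw [mul_diagonal, mul_apply] at hki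
  simpa [mulVec, dotProduct, mul_comm] using hki

theorem inv_mul_mul_eq_of_mul_eq_mul {R : Type*} [CommRing R] {M S D : Matrix n n R}
    (hS : IsUnit S) (h : M * S = S * D) : S⁻¹ * M * S = D := by
  rw [Matrix.mul_assoc, h, ← Matrix.mul_assoc, nonsing_inv_mul S ((isUnit_iff_isUnit_det S).mp hS),
    Matrix.one_mul]

end Eigen

section AlgHom

variable {K L : Type*} [CommSemiring K] [CommSemiring L] [Algebra K L] {n : Type*} [Fintype n]

theorem map_algebraMap_mulVec_comp {m : Type*} (A : Matrix m n K) (φ : L →ₐ[K] L) (w : n → L) :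
    A.map (algebraMap K L) *ᵥ (φ ∘ w) = φ ∘ (A.map (algebraMap K L) *ᵥ w) := by
  funext k
  simp [mulVec, dotProduct, map_sum]

theorem map_algebraMap_mul_of_algHom_eq_mul_diagonal [DecidableEq n] {ι : Type*} [Fintype ι]
    [DecidableEq ι] (A : Matrix n n K) {w : n → L} {c : L}
    (h : A.map (algebraMap K L) *ᵥ w = c • w) (f : ι → L →ₐ[K] L) :
    A.map (algebraMap K L) * of (fun k i => f i (w k)) =
      of (fun k i => f i (w k)) * diagonal fun i => f i c := by
  ext k i
  have hk := congrFun (map_algebraMap_mulVec_comp A (f i) w) k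
  rw [h] at hk
  rw [mul_diagonal, mul_apply]
  simpa [mulVec, dotProduct, mul_comm] using hk

end AlgHom

end Matrix

namespace FiniteField

variable {K : Type*} [Field K] [Fintype K]

theorem frobeniusAlgHom_pow_apply {R : Type*} [CommRing R] [Algebra K R] (n : ℕ) (x : R) :
    (frobeniusAlgHom K R ^ n) x = x ^ Fintype.card K ^ n := by
  rw [AlgHom.coe_pow, coe_frobeniusAlgHom, pow_iterate]

theorem injOn_frobeniusAlgHom_pow_apply {L : Type*} [Field L] [Finite L] [Algebra K L] {ξ : L}
    (hξ : K⟮ξ⟯ = ⊤) :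
    Set.InjOn (fun n : ℕ => (frobeniusAlgHom K L ^ n) ξ) (Set.Iio (Module.finrank K L)) := by
  intro m hm n hn h
  have hadj := Algebra.adjoin_eq_top_of_primitive_element (Algebra.IsAlgebraic.isAlgebraic ξ) hξ
  have := (bijective_frobeniusAlgHom_pow K L).injective (a₁ := ⟨m, hm⟩) (a₂ := ⟨n, hn⟩)
    (AlgHom.ext_of_adjoin_eq_top hadj (by simpa using h))
  exact congrArg Fin.val this

end FiniteField

open FiniteField

theorem stmt_0_general (p r : ℕ) [Fact p.Prime]
    (ξ : GaloisField p r)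
    (hξ : (minpoly (ZMod p) ξ).natDegree = r)
    (A : Matrix (Fin r) (Fin r) (ZMod p))
    (hA : ∀ j : Fin r, ξ * ξ ^ (j : ℕ) =
      ∑ i : Fin r, algebraMap (ZMod p) (GaloisField p r) (A i j) * ξ ^ (i : ℕ)) :
    ∃ S₁ : Fin r → GaloisField p r,
      IsUnit (Matrix.of fun k i : Fin r => (S₁ k) ^ p ^ (i : ℕ)) ∧
      (Matrix.of fun k i : Fin r => (S₁ k) ^ p ^ (i : ℕ))⁻¹ *
          (A.map (algebraMap (ZMod p) (GaloisField p r))) *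
          (Matrix.of fun k i : Fin r => (S₁ k) ^ p ^ (i : ℕ)) =
        Matrix.diagonal (fun i : Fin r => ξ ^ p ^ (i : ℕ)) := by
  have hr : 0 < r := hξ ▸ minpoly.natDegree_pos (IsIntegral.of_finite (ZMod p) ξ)
  have hleft : (fun k : Fin r => ξ ^ (k : ℕ)) ᵥ* A.map (algebraMap (ZMod p) _) =
      ξ • fun k : Fin r => ξ ^ (k : ℕ) := by
    funext j
    simp [vecMul, dotProduct, hA j, mul_comm]
  obtain ⟨S₁, hS₁, heig⟩ :=
    exists_mulVec_eq_smul_of_vecMul_eq_smul (Function.ne_iff.mpr ⟨⟨0, hr⟩, by simp⟩) hleft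
  set φ := frobeniusAlgHom (ZMod p) (GaloisField p r)
  have hφ (i : ℕ) (x : GaloisField p r) : (φ ^ i) x = x ^ p ^ i := by
    rw [frobeniusAlgHom_pow_apply, ZMod.card]
  have hAS := map_algebraMap_mul_of_algHom_eq_mul_diagonal A heig fun i : Fin r => φ ^ (i : ℕ)
  simp only [hφ] at hAS
  have hfin : Module.finrank (ZMod p) (GaloisField p r) = r := GaloisField.finrank p hr.ne'
  have hprim : (ZMod p)⟮ξ⟯ = ⊤ := by
    rw [Field.primitive_element_iff_minpoly_natDegree_eq, hξ, hfin]
  have hinj : Function.Injective fun i : Fin r => ξ ^ p ^ (i : ℕ) := fun i j hij =>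
    Fin.ext <| injOn_frobeniusAlgHom_pow_apply hprim (by simp [hfin]) (by simp [hfin])
      (show (φ ^ (i : ℕ)) ξ = (φ ^ (j : ℕ)) ξ by rwa [hφ, hφ])
  have hcol (i : Fin r) : (of fun k i : Fin r => S₁ k ^ p ^ (i : ℕ)).col i ≠ 0 := fun h =>
    hS₁ <| funext fun k =>
      (pow_eq_zero_iff (pow_ne_zero _ (Fact.out : p.Prime).ne_zero)).mp (congrFun h k)
  have hS := isUnit_of_mul_eq_mul_diagonal hinj hcol hAS
  exact ⟨S₁, hS, inv_mul_mul_eq_of_mul_eq_mul hS hAS⟩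

/-- **Lemma 3.6.** Let `ξ` generate `F_{p^r}` over `F_p` (its minimal polynomial has
degree `r`), and let `A` be the matrix of multiplication by `ξ` in the `F_p`-basis
`{1, ξ, …, ξ^{r-1}}`.  Then there is a vector `S₁` over `F_{p^r}` such that the matrix `S`
whose `i`-th column is the `i`-th entrywise Frobenius power of `S₁` is invertible and
conjugates `A` (viewed over `F_{p^r}`) to `diag(ξ, ξ^p, …, ξ^{p^{r-1}})`. -/
theorem stmt_0 (p r : ℕ) [Fact p.Prime] (hr : 1 ≤ r)
    (ξ : GaloisField p r)
    (hξ : (minpoly (ZMod p) ξ).natDegree = r)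
    (A : Matrix (Fin r) (Fin r) (ZMod p))
    (hA : ∀ j : Fin r, ξ * ξ ^ (j : ℕ) =
      ∑ i : Fin r, algebraMap (ZMod p) (GaloisField p r) (A i j) * ξ ^ (i : ℕ)) :
    ∃ S₁ : Fin r → GaloisField p r,
      IsUnit (Matrix.of fun k i : Fin r => (S₁ k) ^ p ^ (i : ℕ)) ∧
      (Matrix.of fun k i : Fin r => (S₁ k) ^ p ^ (i : ℕ))⁻¹ *
          (A.map (algebraMap (ZMod p) (GaloisField p r))) *
          (Matrix.of fun k i : Fin r => (S₁ k) ^ p ^ (i : ℕ)) =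
        Matrix.diagonal (fun i : Fin r => ξ ^ p ^ (i : ℕ)) :=
  stmt_0_general p r ξ hξ A hA
end

section
/- Let p be a prime, r ≥ 1, and let ξ ∈ F_{p^r} have minimal polynomial of degree r over F_p. Let A ∈ M_r(F_p) be the matrix of multiplication by ξ on F_{p^r} in the basis {1, ξ, ..., ξ^{r-1}}, and let S₁ = (a_0, ..., a_{r-1}) ∈ F_{p^r}^r be a nonzero vector with A·S₁ = ξ·S₁ over F_{p^r}. Let R be a nonzero commutative ring equipped with a ring homomorphism φ : F_{p^r} → R, let M be an R-module, and let s : M^r → M^r be the R-linear endomorphism given by the matrix A with entries mapped into R via φ, i.e., s(m_0,...,m_{r-1})_j = Σ_k φ(A_{jk})·m_k. For each 0 ≤ i ≤ r−1 define α_i : M → M^r by α_i(m) = (φ(a_0^{p^i})·m, ..., φ(a_{r-1}^{p^i})·m). Then: (i) each α_i is injective; (ii) M^r is the internal direct sum of the images M^i := α_i(M) for 0 ≤ i ≤ r−1; and (iii) s ∘ α_i = φ(ξ^{p^i})·α_i, so each M^i lies in the eigenspace of s for the eigenvalue φ(ξ^{p^i}). -/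
/-- **Lemma 3.7 (module-theoretic form).**  Let `ξ ∈ F_{p^r}` have minimal polynomial of
degree `r`, `A` the matrix of multiplication by `ξ` in the basis `{1, ξ, …, ξ^{r-1}}`, and
`S₁` a nonzero eigenvector of `A` over `F_{p^r}` for the eigenvalue `ξ`.  For a nonzero
commutative ring `R` with a ring map `φ : F_{p^r} → R` and an `R`-module `M`, let
`s : M^r → M^r` be the endomorphism with matrix `φ(A)`, and `α_i : M → M^r` the map
`m ↦ (φ(a_k^{p^i})·m)_k` built from the `i`-th Frobenius conjugate of `S₁`.  Then each
`α_i` is injective, `M^r` is the internal direct sum of the images of the `α_i`, and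
`s ∘ α_i = φ(ξ^{p^i}) • α_i`. -/
theorem stmt_4 (p r : ℕ) [Fact p.Prime] (hr : 1 ≤ r)
    (ξ : GaloisField p r)
    (hξ : (minpoly (ZMod p) ξ).natDegree = r)
    (A : Matrix (Fin r) (Fin r) (ZMod p))
    (hA : ∀ j : Fin r, ξ * ξ ^ (j : ℕ) =
      ∑ i : Fin r, algebraMap (ZMod p) (GaloisField p r) (A i j) * ξ ^ (i : ℕ))
    (S₁ : Fin r → GaloisField p r) (hS₁ : S₁ ≠ 0)
    (hev : (A.map (algebraMap (ZMod p) (GaloisField p r))).mulVec S₁ = ξ • S₁)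
    (R : Type*) [CommRing R] [Nontrivial R]
    (φ : GaloisField p r →+* R)
    (M : Type*) [AddCommGroup M] [Module R M]
    (s : (Fin r → M) →ₗ[R] (Fin r → M))
    (hs : ∀ (m : Fin r → M) (j : Fin r),
      s m j = ∑ k : Fin r, φ (algebraMap (ZMod p) (GaloisField p r) (A j k)) • m k)
    (α : Fin r → (M →ₗ[R] (Fin r → M)))
    (hα : ∀ (i : Fin r) (m : M) (k : Fin r),
      α i m k = φ ((S₁ k) ^ p ^ (i : ℕ)) • m) :
    (∀ i : Fin r, Function.Injective (α i)) ∧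
    DirectSum.IsInternal (fun i : Fin r => LinearMap.range (α i)) ∧
    (∀ (i : Fin r) (m : M), s (α i m) = φ (ξ ^ p ^ (i : ℕ)) • α i m) := by
  classical
  have hp : p.Prime := Fact.out
  have hr0 : r ≠ 0 := by omega
  -- elements of the prime field are fixed by Frobenius powers
  have halg : ∀ (c : ZMod p) (n : ℕ),
      (algebraMap (ZMod p) (GaloisField p r) c) ^ p ^ n
        = algebraMap (ZMod p) (GaloisField p r) c := by
    intro c n
    induction n with
    | zero => simp
    | succ n ih =>
      rw [pow_succ, pow_mul, ih, ← map_pow, ZMod.pow_card]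
  -- the Frobenius-twisted eigenvector equation
  have key : ∀ (n : ℕ) (j : Fin r),
      ∑ k, algebraMap (ZMod p) (GaloisField p r) (A j k) * S₁ k ^ p ^ n
        = ξ ^ p ^ n * S₁ j ^ p ^ n := by
    intro n j
    have h0 : ∑ k, algebraMap (ZMod p) (GaloisField p r) (A j k) * S₁ k = ξ * S₁ j := by
      have := congrFun hev j
      simpa [Matrix.mulVec, dotProduct, Matrix.map_apply] using this
    have h1 := congrArg (iterateFrobenius (GaloisField p r) p n) h0
    simpa [map_sum, map_mul, iterateFrobenius_def, halg] using h1
  -- distinct Frobenius conjugates of ξ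
  have hdist : ∀ d : ℕ, 0 < d → d < r → ξ ^ p ^ d ≠ ξ := by
    intro d hd0 hdr heq
    have hψs : ∀ (c : ZMod p) (x : GaloisField p r),
        iterateFrobenius (GaloisField p r) p d (c • x)
          = c • iterateFrobenius (GaloisField p r) p d x := by
      intro c x
      simp [Algebra.smul_def, iterateFrobenius_def, mul_pow, halg]
    set ψ : GaloisField p r →ₐ[ZMod p] GaloisField p r :=
      AlgHom.mk' (iterateFrobenius (GaloisField p r) p d) hψs with hψ
    have hint : IsIntegral (ZMod p) ξ := IsIntegral.of_finite (ZMod p) ξ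
    have hadj : Algebra.adjoin (ZMod p) ({ξ} : Set (GaloisField p r)) = ⊤ := by
      rw [← Algebra.toSubmodule_eq_top]
      apply Submodule.eq_top_of_finrank_eq
      have h1 : Module.finrank (ZMod p)
          (Algebra.adjoin (ZMod p) ({ξ} : Set (GaloisField p r))) = r := by
        rw [(Algebra.adjoin.powerBasis hint).finrank]
        exact hξ
      rw [GaloisField.finrank p hr0]
      exact h1
    have hψid : ψ = AlgHom.id (ZMod p) (GaloisField p r) := by
      apply AlgHom.ext_of_adjoin_eq_top hadj
      intro x hx
      rw [Set.mem_singleton_iff] at hx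
      subst hx
      simpa [hψ, AlgHom.coe_mk', iterateFrobenius_def] using heq
    have hall : ∀ x : GaloisField p r, x ^ p ^ d = x := by
      intro x
      have := DFunLike.congr_fun hψid x
      simpa [hψ, iterateFrobenius_def] using this
    haveI : Fintype (GaloisField p r) := Fintype.ofFinite _
    have hcard : Fintype.card (GaloisField p r) = p ^ r := by
      have := GaloisField.card p r hr0
      simpa [Nat.card_eq_fintype_card] using this
    set f : Polynomial (GaloisField p r) := Polynomial.X ^ p ^ d - Polynomial.X with hf
    have hpd1 : 1 < p ^ d := Nat.one_lt_pow (by omega) hp.one_lt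
    have hdeg : f.natDegree = p ^ d := by
      rw [hf, Polynomial.natDegree_sub_eq_left_of_natDegree_lt]
      · exact Polynomial.natDegree_X_pow _
      · rw [Polynomial.natDegree_X_pow, Polynomial.natDegree_X]
        exact hpd1
    have hfne : f ≠ 0 := by
      intro h0
      rw [h0, Polynomial.natDegree_zero] at hdeg
      omega
    have hroots : ∀ x : GaloisField p r, x ∈ f.roots := by
      intro x
      rw [Polynomial.mem_roots hfne]
      simp [hf, Polynomial.IsRoot, hall x]
    have hle : Fintype.card (GaloisField p r) ≤ p ^ d := by
      calc Fintype.card (GaloisField p r) = (Finset.univ : Finset (GaloisField p r)).card := rfl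
        _ ≤ f.roots.toFinset.card :=
            Finset.card_le_card (fun x _ => Multiset.mem_toFinset.2 (hroots x))
        _ ≤ Multiset.card f.roots := Multiset.toFinset_card_le _
        _ ≤ f.natDegree := Polynomial.card_roots' f
        _ = p ^ d := hdeg
    have hlt : p ^ d < p ^ r := Nat.pow_lt_pow_right hp.one_lt hdr
    omega
  have haux : ∀ i j : Fin r, (i : ℕ) < (j : ℕ) →
      ξ ^ p ^ (i : ℕ) ≠ ξ ^ p ^ (j : ℕ) := by
    intro i j hlt heq
    have hd0 : 0 < (j : ℕ) - (i : ℕ) := by omega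
    have hdr : (j : ℕ) - (i : ℕ) < r := by omega
    apply hdist _ hd0 hdr
    have hinj2 : Function.Injective (iterateFrobenius (GaloisField p r) p (i : ℕ)) :=
      (iterateFrobenius (GaloisField p r) p (i : ℕ)).injective
    apply hinj2
    simp only [iterateFrobenius_def]
    rw [← pow_mul, ← pow_add]
    have hij : (j : ℕ) - (i : ℕ) + (i : ℕ) = (j : ℕ) := by omega
    rw [hij]
    exact heq.symm
  have hinj : Function.Injective fun i : Fin r => ξ ^ p ^ (i : ℕ) := by
    intro i j h
    simp only at h
    rcases lt_trichotomy (i : ℕ) (j : ℕ) with hlt | heqn | hgt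
    · exact absurd h (haux i j hlt)
    · exact Fin.ext heqn
    · exact absurd h.symm (haux j i hgt)
  -- the Frobenius conjugates of S₁ are eigenvectors over the field
  set v : Fin r → (Fin r → GaloisField p r) := fun i k => S₁ k ^ p ^ (i : ℕ) with hv
  set T := Matrix.mulVecLin (A.map (algebraMap (ZMod p) (GaloisField p r))) with hT
  have hTv : ∀ i : Fin r, T (v i) = (ξ ^ p ^ (i : ℕ)) • v i := by
    intro i
    funext j
    simp only [hT, hv, Matrix.mulVecLin_apply, Matrix.mulVec, dotProduct,
      Matrix.map_apply, Pi.smul_apply, smul_eq_mul]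
    exact key (i : ℕ) j
  have hvne : ∀ i : Fin r, v i ≠ 0 := by
    intro i h0
    obtain ⟨k, hk⟩ := Function.ne_iff.mp hS₁
    apply hk
    have := congrFun h0 k
    simp only [hv, Pi.zero_apply] at this
    exact (pow_eq_zero_iff (pow_ne_zero _ hp.ne_zero)).mp this
  have hli : LinearIndependent (GaloisField p r) v :=
    Module.End.eigenvectors_linearIndependent' T (fun i : Fin r => ξ ^ p ^ (i : ℕ)) hinj v
      (fun i => ⟨Module.End.mem_eigenspace_iff.2 (hTv i), hvne i⟩)
  haveI : Nonempty (Fin r) := ⟨⟨0, hr⟩⟩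
  have hcard' : Fintype.card (Fin r) = Module.finrank (GaloisField p r)
      (Fin r → GaloisField p r) := by
    simp [Module.finrank_fin_fun]
  set b := basisOfLinearIndependentOfCardEqFinrank hli hcard' with hb
  set B : Matrix (Fin r) (Fin r) (GaloisField p r) := fun i k => S₁ k ^ p ^ (i : ℕ) with hB
  have hBt : (Pi.basisFun (GaloisField p r) (Fin r)).toMatrix ⇑b = B.transpose := by
    funext k i
    rw [Module.Basis.toMatrix_apply, hb, coe_basisOfLinearIndependentOfCardEqFinrank,
      Pi.basisFun_repr]
    rfl
  haveI := (Pi.basisFun (GaloisField p r) (Fin r)).invertibleToMatrix b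
  have hdet : IsUnit B.det := by
    have h1 : IsUnit ((Pi.basisFun (GaloisField p r) (Fin r)).toMatrix ⇑b).det :=
      (Matrix.isUnit_iff_isUnit_det _).mp (isUnit_of_invertible _)
    rwa [hBt, Matrix.det_transpose] at h1
  set C := B⁻¹ with hC
  have hBC : B * C = 1 := Matrix.mul_nonsing_inv B hdet
  have hCB : C * B = 1 := Matrix.nonsing_inv_mul B hdet
  -- the projections
  set P : Fin r → ((Fin r → M) →ₗ[R] M) :=
    fun i => ∑ k, φ (C k i) • (LinearMap.proj k : (Fin r → M) →ₗ[R] M) with hPdef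
  have hP : ∀ (i : Fin r) (w : Fin r → M), P i w = ∑ k, φ (C k i) • w k := by
    intro i w
    simp [hPdef, LinearMap.sum_apply, LinearMap.smul_apply, LinearMap.proj_apply]
  have hPα : ∀ (i j : Fin r) (m : M), P i (α j m) = if j = i then m else 0 := by
    intro i j m
    have h1 : P i (α j m) = φ ((B * C) j i) • m := by
      rw [hP, Matrix.mul_apply, map_sum, Finset.sum_smul]
      refine Finset.sum_congr rfl fun k _ => ?_
      rw [hα, smul_smul, ← map_mul, mul_comm (C k i)]
    rw [h1, hBC, Matrix.one_apply]
    split <;> simp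
  have hrecon : ∀ w : Fin r → M, ∑ i, α i (P i w) = w := by
    intro w
    funext k
    have h1 : ∀ i : Fin r, (α i (P i w)) k = ∑ k', φ (C k' i * B i k) • w k' := by
      intro i
      rw [hα, hP, Finset.smul_sum]
      refine Finset.sum_congr rfl fun k' _ => ?_
      rw [smul_smul, ← map_mul, mul_comm (S₁ k ^ p ^ (i : ℕ))]
    have h2 : (∑ i, α i (P i w)) k = ∑ k', φ ((C * B) k' k) • w k' := by
      rw [Finset.sum_apply]
      calc ∑ i, (α i (P i w)) k = ∑ i, ∑ k', φ (C k' i * B i k) • w k' :=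
            Finset.sum_congr rfl fun i _ => h1 i
        _ = ∑ k', ∑ i, φ (C k' i * B i k) • w k' := Finset.sum_comm
        _ = ∑ k', φ ((C * B) k' k) • w k' := by
            refine Finset.sum_congr rfl fun k' _ => ?_
            rw [Matrix.mul_apply, map_sum, Finset.sum_smul]
    rw [h2, hCB]
    simp [Matrix.one_apply, apply_ite φ, ite_smul]
  -- part (i)
  have inj : ∀ i : Fin r, Function.Injective (α i) := by
    intro i m₁ m₂ hm
    have h1 := hPα i i m₁
    have h2 := hPα i i m₂
    rw [if_pos rfl] at h1 h2
    rw [← h1, ← h2, hm]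
  -- part (iii)
  have hcomm : ∀ (i : Fin r) (m : M), s (α i m) = φ (ξ ^ p ^ (i : ℕ)) • α i m := by
    intro i m
    funext j
    have hL : s (α i m) j
        = φ (∑ k, algebraMap (ZMod p) (GaloisField p r) (A j k) * S₁ k ^ p ^ (i : ℕ)) • m := by
      rw [hs, map_sum, Finset.sum_smul]
      refine Finset.sum_congr rfl fun k _ => ?_
      rw [hα, smul_smul, ← map_mul]
    rw [hL, key, map_mul, Pi.smul_apply, hα, smul_smul]
  -- part (ii)
  have hmem : ∀ (i : Fin r) (m : M), α i m ∈ LinearMap.range (α i) := fun i m => ⟨m, rfl⟩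
  refine ⟨inj, ⟨?_, ?_⟩, hcomm⟩
  · -- injectivity of the canonical map
    rw [injective_iff_map_eq_zero]
    intro x hx
    have hxm : ∀ i, ∃ m, α i m = ((x i : Fin r → M)) := fun i => (x i).2
    choose mm hmm using hxm
    have hx' : ∑ i, ((x i : Fin r → M)) = 0 := by
      calc ∑ i, ((x i : Fin r → M))
          = DirectSum.coeAddMonoidHom (fun i : Fin r => LinearMap.range (α i))
              (∑ i, DirectSum.of (fun i : Fin r => ↥(LinearMap.range (α i))) i (x i)) := by
            rw [map_sum]
            simp [DirectSum.coeAddMonoidHom_of]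
        _ = 0 := by rw [DirectSum.sum_univ_of]; exact hx
    have hmz : ∀ j : Fin r, mm j = 0 := by
      intro j
      have h3 := congrArg (P j) hx'
      rw [map_sum, map_zero] at h3
      have h2 : ∑ i, P j ((x i : Fin r → M)) = mm j := by
        have h4 : ∀ i, P j ((x i : Fin r → M)) = if i = j then mm i else 0 := fun i => by
          rw [← hmm i, hPα]
        rw [Finset.sum_congr rfl fun i _ => h4 i]
        simp
      rw [h2] at h3
      exact h3
    apply DFinsupp.ext
    intro j
    apply Subtype.ext
    have : ((x j : Fin r → M)) = 0 := by rw [← hmm j, hmz j, map_zero]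
    simpa using this
  · -- surjectivity
    intro w
    refine ⟨∑ i, DirectSum.of (fun i : Fin r => ↥(LinearMap.range (α i))) i
      ⟨α i (P i w), hmem i _⟩, ?_⟩
    rw [map_sum]
    simp only [DirectSum.coeAddMonoidHom_of]
    exact hrecon w
end
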